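/- arXiv:2604.23206 — 7 statements merged into one kernel-verified Lean document; each statement's English description precedes it below -/
import Mathlib

section
/- For every nonzero integer m and every integer n ≥ 1, the n-th harmonic number satisfies H_n = (1/m) · Σ_{k=1}^{n} ((-1)^{k+1}/k) · C(m·k, k) · C(n + (m-1)·k, n - k), where the equality is an identity of rational numbers. -/
/-- Generalized binomial coefficient `C(a, b) = a(a-1)⋯(a-b+1)/b!` for `a : ℚ`, `b : ℕ`. -/
noncomputable def gchoose (a : ℚ) (b : ℕ) : ℚ :=
  (∏ i ∈ Finset.range b, (a - i)) / (Nat.factorial b)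

/-!
Put `t = 1 - m`. The Rothe–Hagen identity
`∑ₖ r / (r + t k) * C(r + t k, k) * C(s - t k, n - k) = C(r + s, n)`
is a polynomial identity in `r`; it is proved for integral `r` and `t` by induction on `n` and `r`
using only Pascal's rule, and so holds identically in `r`. Differentiating it at `r = 0` with
`s = n` gives the theorem: `d/dr C(r + n, n) = H_n` at `r = 0`, and the `k`-th coefficient
`r / k * C(r + t k - 1, k - 1)` has derivative
`C(t k - 1, k - 1) / k = (-1)^(k+1) C(m k, k) / (m k)`.
-/

open Polynomial Finset

section BinomialRing

variable {R : Type*} [CommRing R] [BinomialRing R]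

theorem add_one_mul_choose_add_one (r : R) (k : ℕ) :
    (k + 1 : R) * Ring.choose r (k + 1) = r * Ring.choose (r - 1) k := by
  simpa [Ring.choose_one_right, nsmul_eq_mul, add_comm] using
    Ring.choose_smul_choose r (Nat.le_add_left 1 k)

theorem eq_zero_of_add_one_mul_eq_zero {x : R} {k : ℕ} (h : (k + 1 : R) * x = 0) : x = 0 := by
  have := BinomialRing.toIsAddTorsionFree (R := R)
  rw [← Nat.cast_succ, ← nsmul_eq_mul] at h
  exact (nsmul_eq_zero_iff_right k.succ_ne_zero).mp h

/-- `r / (r + t k) * C(r + t k, k)`, the coefficient of `zᵏ` in `B_t(z) ^ r` for the generalized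
binomial series `B_t = 1 + z B_t ^ t`, written without division. -/
def rotheCoeff (t r : R) : ℕ → R
  | 0 => 1
  | k + 1 => Ring.choose (t * (k + 1) + r) (k + 1) - t * Ring.choose (t * (k + 1) + r - 1) k

@[simp]
theorem rotheCoeff_zero (t r : R) : rotheCoeff t r 0 = 1 := rfl

theorem rotheCoeff_add_one_succ (t r : R) (k : ℕ) :
    rotheCoeff t (r + 1) (k + 1) = rotheCoeff t r (k + 1) + rotheCoeff t (r + t) k := by
  cases k with
  | zero => simp [rotheCoeff]
  | succ k =>
    simp only [rotheCoeff]
    push_cast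
    set a := t * (k + 1 + 1) + r
    rw [show t * (k + 1 + 1) + (r + 1) - 1 = a - 1 + 1 by ring,
      show t * (k + 1 + 1) + (r + 1) = a + 1 by ring,
      show t * (k + 1) + (r + t) - 1 = a - 1 by ring,
      show t * (k + 1) + (r + t) = a by ring,
      Ring.choose_succ_succ a, Ring.choose_succ_succ (a - 1)]
    ring

theorem add_one_mul_rotheCoeff_succ (t r : R) (k : ℕ) :
    (k + 1 : R) * rotheCoeff t r (k + 1) = r * Ring.choose (t * (k + 1) + r - 1) k := by
  rw [rotheCoeff, mul_sub, add_one_mul_choose_add_one]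
  ring

theorem rotheCoeff_zero_left (t : R) {k : ℕ} (hk : k ≠ 0) : rotheCoeff t 0 k = 0 := by
  obtain ⟨k, rfl⟩ := Nat.exists_eq_succ_of_ne_zero hk
  exact eq_zero_of_add_one_mul_eq_zero (by rw [add_one_mul_rotheCoeff_succ, zero_mul])

theorem map_rotheCoeff {S F : Type*} [CommRing S] [BinomialRing S] [FunLike F R S]
    [RingHomClass F R S] (f : F) (t r : R) (k : ℕ) :
    f (rotheCoeff t r k) = rotheCoeff (f t) (f r) k := by
  cases k <;> simp [rotheCoeff, Ring.map_choose]

def rotheSum (t r c : R) (n : ℕ) : R :=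
  ∑ k ∈ range (n + 1), rotheCoeff t r k * Ring.choose (c - t * k) (n - k)

theorem rotheSum_zero_left (t c : R) (n : ℕ) : rotheSum t 0 c n = Ring.choose c n := by
  rw [rotheSum, sum_eq_single 0 (fun k _ hk => by rw [rotheCoeff_zero_left t hk, zero_mul])
    (by simp)]
  simp

theorem rotheSum_add_one_succ (t r c : R) (n : ℕ) :
    rotheSum t (r + 1) c (n + 1) = rotheSum t r c (n + 1) + rotheSum t (r + t) (c - t) n := by
  rw [rotheSum, rotheSum, rotheSum,
    sum_range_succ' (fun k => rotheCoeff t (r + 1) k * Ring.choose (c - t * k) (n + 1 - k)),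
    sum_range_succ' (fun k => rotheCoeff t r k * Ring.choose (c - t * k) (n + 1 - k))]
  simp only [rotheCoeff_add_one_succ, add_mul, sum_add_distrib, rotheCoeff_zero]
  rw [add_right_comm]
  congr 1
  refine sum_congr rfl fun k _ => ?_
  push_cast
  rw [show c - t * (k + 1) = c - t - t * k by ring]

theorem map_rotheSum {S F : Type*} [CommRing S] [BinomialRing S] [FunLike F R S]
    [RingHomClass F R S] (f : F) (t r c : R) (n : ℕ) :
    f (rotheSum t r c n) = rotheSum (f t) (f r) (f c) n := by
  simp [rotheSum, map_rotheCoeff, Ring.map_choose]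

/-- The Rothe–Hagen identity. The induction on `r` shifts `r` by `t`, so it needs `t` integral. -/
theorem rotheSum_intCast (t r : ℤ) (c : R) (n : ℕ) :
    rotheSum (t : R) r c n = Ring.choose (r + c) n := by
  induction n generalizing r c with
  | zero => simp [rotheSum]
  | succ n ih =>
    induction r using Int.induction_on with
    | zero => simpa using rotheSum_zero_left (t : R) c (n + 1)
    | succ r ihr =>
      have hshift := ih (r + t) (c - t)
      push_cast at hshift ihr ⊢
      rw [rotheSum_add_one_succ, ihr, hshift, show (r : R) + t + (c - t) = r + c by ring,
        show (r : R) + 1 + c = r + c + 1 by ring, Ring.choose_succ_succ, add_comm]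
    | pred r ihr =>
      have hshift := ih (-r - 1 + t) (c - t)
      have h := rotheSum_add_one_succ (t : R) (-r - 1) c n
      push_cast at hshift ihr h ⊢
      rw [sub_add_cancel, ihr, hshift, show -(r : R) - 1 + t + (c - t) = -r - 1 + c by ring,
        show -(r : R) + c = -r - 1 + c + 1 by ring, Ring.choose_succ_succ] at h
      linear_combination -h

end BinomialRing

theorem eval_choose (x : ℚ) (p : ℚ[X]) (n : ℕ) :
    (Ring.choose p n).eval x = Ring.choose (p.eval x) n :=
  Ring.map_choose (evalRingHom x) p n

theorem rotheSum_X (t : ℤ) (c : ℚ) (n : ℕ) :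
    rotheSum (C (t : ℚ)) X (C c) n = Ring.choose (X + C c) n := by
  refine eq_of_infinite_eval_eq _ _
    (Set.infinite_of_injective_forall_mem (Int.cast_injective (α := ℚ)) fun r => ?_)
  simp only [Set.mem_ofPred_eq, ← coe_evalRingHom, map_rotheSum, Ring.map_choose]
  simpa using rotheSum_intCast t r c n

theorem derivative_rotheCoeff_X_eval_zero (t : ℚ) (k : ℕ) :
    (derivative (rotheCoeff (C t) X (k + 1))).eval 0 =
      Ring.choose (t * (k + 1) - 1) k / (k + 1) := by
  have h := congrArg (fun p => (derivative p).eval 0) (add_one_mul_rotheCoeff_succ (C t) X k)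
  simp only [derivative_mul, derivative_add, derivative_natCast, derivative_one, add_zero, zero_mul,
    zero_add, eval_mul, eval_add, eval_natCast, eval_one, derivative_X, one_mul, eval_choose,
    eval_sub, eval_C, eval_X] at h
  field_simp
  linear_combination h

theorem derivative_choose_X_add_natCast_eval_zero (n : ℕ) :
    (derivative (Ring.choose (X + (n : ℚ[X])) n)).eval 0 = harmonic n := by
  induction n with
  | zero => simp
  | succ n ih =>
    have h := congrArg (fun p => (derivative p).eval 0)
      (add_one_mul_choose_add_one (X + (n : ℚ[X]) + 1) n)
    simp only [derivative_mul, derivative_add, derivative_natCast, derivative_one, add_zero,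
      zero_mul, zero_add, eval_mul, eval_add, eval_natCast, eval_one, add_sub_cancel_right,
      derivative_X, one_mul, eval_choose, eval_X, Ring.choose_natCast, Nat.choose_self,
      Nat.cast_one, ih] at h
    rw [harmonic_succ]
    push_cast
    rw [← add_assoc]
    field_simp
    linear_combination h

theorem derivative_rotheSum_X_eval_zero (t c : ℚ) (n : ℕ) :
    (derivative (rotheSum (C t) X (C c) n)).eval 0 = ∑ k ∈ range n,
      Ring.choose (t * (k + 1) - 1) k / (k + 1) * Ring.choose (c - t * (k + 1)) (n - (k + 1)) := by
  have hconst (k : ℕ) :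
      Ring.choose (C c - C t * k) (n - k) = C (Ring.choose (c - t * k) (n - k)) := by
    rw [Ring.map_choose C]
    simp
  rw [rotheSum, sum_range_succ', map_add, map_sum, eval_add, eval_finsetSum]
  simp only [hconst]
  simp [derivative_mul, derivative_rotheCoeff_X_eval_zero]

theorem harmonic_eq_sum_choose (t : ℤ) (n : ℕ) :
    harmonic n = ∑ k ∈ range n, Ring.choose ((t : ℚ) * (k + 1) - 1) k / (k + 1) *
      Ring.choose ((n : ℚ) - t * (k + 1)) (n - (k + 1)) := by
  rw [← derivative_choose_X_add_natCast_eval_zero, ← derivative_rotheSum_X_eval_zero,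
    rotheSum_X, map_natCast]

theorem gchoose_eq_choose (a : ℚ) (b : ℕ) : gchoose a b = Ring.choose a b := by
  rw [Ring.choose_eq_smul, ← aeval_eq_smeval, aeval_def, eval₂_eq_eval_map, descPochhammer_map,
    descPochhammer_eval_eq_prod_range, gchoose, smul_eq_mul, div_eq_inv_mul]

theorem mul_choose_one_sub_mul_sub_one (m : ℚ) (k : ℕ) :
    m * Ring.choose ((1 - m) * (k + 1) - 1) k = (-1) ^ k * Ring.choose (m * (k + 1)) (k + 1) := by
  have habs : Ring.choose (m * (k + 1)) (k + 1) = m * Ring.choose (m * (k + 1) - 1) k :=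
    mul_left_cancel₀ k.cast_add_one_ne_zero
      ((add_one_mul_choose_add_one (m * (k + 1)) k).trans (by ring))
  rw [habs, show (1 - m) * (k + 1) - 1 = -(m * (k + 1) - k) by ring, Ring.choose_neg,
    show m * (k + 1) - k + k - 1 = m * (k + 1) - 1 by ring, Units.smul_def, zsmul_eq_mul]
  simp only [Int.coe_negOnePow, Int.natAbs_natCast]
  ring

theorem mul_harmonic_eq_sum (m : ℤ) (n : ℕ) :
    (m : ℚ) * harmonic n = ∑ k ∈ Icc 1 n, ((-1 : ℚ) ^ (k + 1) / (k : ℚ)) *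
      gchoose ((m : ℚ) * k) k * gchoose ((n : ℚ) + ((m : ℚ) - 1) * k) (n - k) := by
  rw [harmonic_eq_sum_choose (1 - m), mul_sum, ← Ico_add_one_right_eq_Icc, sum_Ico_eq_sum_range,
    Nat.add_sub_cancel]
  refine sum_congr rfl fun k _ => ?_
  have h := mul_choose_one_sub_mul_sub_one m k
  simp only [add_comm 1 k, gchoose_eq_choose]
  push_cast
  rw [show (n : ℚ) - (1 - m) * (k + 1) = n + (m - 1) * (k + 1) by ring]
  linear_combination Ring.choose ((n : ℚ) + (m - 1) * (k + 1)) (n - (k + 1)) / (k + 1) * h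

theorem bala_identity_general (m : ℤ) (hm : m ≠ 0) (n : ℕ) :
    harmonic n = (1 / (m : ℚ)) * ∑ k ∈ Finset.Icc 1 n,
      ((-1 : ℚ) ^ (k + 1) / (k : ℚ)) * gchoose ((m : ℚ) * k) k *
        gchoose ((n : ℚ) + ((m : ℚ) - 1) * k) (n - k) := by
  rw [← mul_harmonic_eq_sum, one_div, inv_mul_cancel_left₀ (Int.cast_ne_zero.mpr hm)]

/-- Bala's identity: for every nonzero integer `m` and every `n ≥ 1`,
`H_n = (1/m) · Σ_{k=1}^{n} ((-1)^{k+1}/k) · C(mk, k) · C(n + (m-1)k, n-k)` in `ℚ`. -/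
theorem bala_identity (m : ℤ) (hm : m ≠ 0) (n : ℕ) (hn : 1 ≤ n) :
    harmonic n = (1 / (m : ℚ)) * ∑ k ∈ Finset.Icc 1 n,
      ((-1 : ℚ) ^ (k + 1) / (k : ℚ)) * gchoose ((m : ℚ) * k) k *
        gchoose ((n : ℚ) + ((m : ℚ) - 1) * k) (n - k) :=
  bala_identity_general m hm n
end

section
/- For every complex number m ≠ 0 and every integer n ≥ 1, H_n = (1/m) · Σ_{k=1}^{n} ((-1)^{k+1}/k) · C(m·k, k) · C(n + (m-1)·k, n - k), where the equality is an identity of complex numbers. -/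
/-- Generalized binomial coefficient `C(a, b) = a(a-1)⋯(a-b+1)/b!` for `a : ℂ`, `b : ℕ`. -/
noncomputable def gchooseC (a : ℂ) (b : ℕ) : ℂ :=
  (∏ i ∈ Finset.range b, (a - i)) / (Nat.factorial b)

/-!
Absorption `C(mk, k) = (m / k) C(mk - 1, k - 1)` removes the factor `1 / m`, and Pascal's rule
on the last binomial turns the sum for `n + 1` into the sum for `n` plus a sum `Sₙ`, so it
suffices to show `Sₙ = 1 / (n + 1)`. After an upper negation, `Sₙ` is the coefficient of `x`
in the Hagen–Rothe convolution
`∑ x / (x + kw) C(x + kw, k) C(y + (N - k) w, N - k) = C(x + y + Nw, N)`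
at `w = 1 - m`, `N = n + 1`, `y = n - Nw`, whose right side `C(x + n, n + 1)` is
`x C(x + n, n) / (n + 1)`.
The Hagen–Rothe identity is a polynomial identity in `x` whose two sides satisfy the same
recurrence under `x ↦ x + 1`: their difference is a periodic polynomial, hence constant, and it
vanishes at `x = 0`.
-/

open Finset Polynomial

namespace Ring

variable {R : Type*} [CommRing R] [BinomialRing R]

theorem choose_succ_right_eq (r : R) (k : ℕ) :
    (k + 1) • choose r (k + 1) = choose r k * (r - k) := by
  simpa using choose_smul_choose r (Nat.le_succ k)

theorem succ_mul_choose_eq (r : R) (k : ℕ) :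
    (r + 1) * choose r k = (k + 1) • choose (r + 1) (k + 1) := by
  simpa using (choose_smul_choose (r + 1) (Nat.le_add_left 1 k)).symm

theorem choose_neg_eq (r : R) (n : ℕ) : choose (-r) n = (-1) ^ n * choose (r + n - 1) n := by
  rw [choose_neg, Units.smul_def, Int.coe_negOnePow_natCast, zsmul_eq_mul]
  push_cast
  rfl

end Ring

theorem gchooseC_eq_choose (a : ℂ) (b : ℕ) : gchooseC a b = Ring.choose a b := by
  rw [Ring.choose_eq_smul, gchooseC, ← aeval_eq_smeval, aeval_def, eval₂_eq_eval_map,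
    descPochhammer_map, descPochhammer_eval_eq_prod_range, smul_eq_mul, div_eq_inv_mul]

theorem sum_Icc_one_eq_sum_antidiagonal {M : Type*} [AddCommMonoid M] (n : ℕ)
    (g : ℕ → ℕ → M) :
    ∑ k ∈ Icc 1 (n + 1), g k (n + 1 - k) = ∑ p ∈ antidiagonal n, g (p.1 + 1) p.2 := by
  rw [Nat.sum_antidiagonal_eq_sum_range_succ (fun i j => g (i + 1) j),
    ← Ico_add_one_right_eq_Icc, sum_Ico_eq_sum_range]
  refine sum_congr rfl fun k _ => ?_
  rw [add_comm 1 k, Nat.add_sub_add_right]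

section PolynomialFun

variable {K : Type*} [Field K]

@[fun_prop]
def IsPolynomialFun (f : K → K) : Prop := ∃ p : K[X], ∀ x, p.eval x = f x

@[fun_prop]
theorem isPolynomialFun_const (c : K) : IsPolynomialFun fun _ : K => c := ⟨C c, fun _ => eval_C⟩

@[fun_prop]
theorem isPolynomialFun_id : IsPolynomialFun fun x : K => x := ⟨X, fun _ => eval_X⟩

namespace IsPolynomialFun

variable {f g : K → K}

@[fun_prop]
theorem add (hf : IsPolynomialFun f) (hg : IsPolynomialFun g) :
    IsPolynomialFun fun x => f x + g x := by
  obtain ⟨p, hp⟩ := hf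
  obtain ⟨q, hq⟩ := hg
  exact ⟨p + q, fun x => by simp [hp, hq]⟩

@[fun_prop]
theorem sub (hf : IsPolynomialFun f) (hg : IsPolynomialFun g) :
    IsPolynomialFun fun x => f x - g x := by
  obtain ⟨p, hp⟩ := hf
  obtain ⟨q, hq⟩ := hg
  exact ⟨p - q, fun x => by simp [hp, hq]⟩

@[fun_prop]
theorem mul (hf : IsPolynomialFun f) (hg : IsPolynomialFun g) :
    IsPolynomialFun fun x => f x * g x := by
  obtain ⟨p, hp⟩ := hf
  obtain ⟨q, hq⟩ := hg
  exact ⟨p * q, fun x => by simp [hp, hq]⟩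

@[fun_prop]
theorem div_const (hf : IsPolynomialFun f) (c : K) : IsPolynomialFun fun x => f x / c := by
  obtain ⟨p, hp⟩ := hf
  exact ⟨p * C c⁻¹, fun x => by simp [hp, div_eq_mul_inv]⟩

@[fun_prop]
theorem finset_sum {ι : Type*} (s : Finset ι) {f : ι → K → K}
    (hf : ∀ i ∈ s, IsPolynomialFun (f i)) : IsPolynomialFun fun x => ∑ i ∈ s, f i x := by
  choose p hp using hf
  refine ⟨∑ i ∈ s.attach, p i.1 i.2, fun x => ?_⟩
  dsimp only
  rw [eval_finsetSum, ← sum_attach s (f · x)]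
  exact sum_congr rfl fun i _ => hp i.1 i.2 x

theorem eq_zero_of_infinite (hf : IsPolynomialFun f) {s : Set K} (hs : s.Infinite)
    (h : ∀ x ∈ s, f x = 0) (x : K) : f x = 0 := by
  obtain ⟨p, hp⟩ := hf
  have hp0 : p = 0 := eq_zero_of_infinite_isRoot p (hs.mono fun y hy => by simp [hp, h y hy])
  rw [← hp, hp0, eval_zero]

variable [CharZero K]

@[fun_prop]
theorem choose (hf : IsPolynomialFun f) (n : ℕ) :
    IsPolynomialFun fun x => Ring.choose (f x) n := by
  obtain ⟨p, hp⟩ := hf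
  refine ⟨C (n.factorial : K)⁻¹ * (descPochhammer K n).comp p, fun x => ?_⟩
  dsimp only
  rw [Ring.choose_eq_smul, ← aeval_eq_smeval, aeval_def, eval₂_eq_eval_map,
    descPochhammer_map, smul_eq_mul, eval_mul, eval_C, eval_comp, hp]

theorem apply_eq_apply_zero_of_periodic (hf : IsPolynomialFun f) (hper : Function.Periodic f 1)
    (x : K) : f x = f 0 := by
  have hg : IsPolynomialFun fun x => f x - f 0 := by fun_prop
  refine sub_eq_zero.1 (hg.eq_zero_of_infinite (Set.infinite_range_of_injective
    Nat.cast_injective) ?_ x)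
  rintro _ ⟨j, rfl⟩
  simpa using sub_eq_zero.2 (hper.nat_mul_eq j)

end IsPolynomialFun

end PolynomialFun

section Rothe

variable {K : Type*} [Field K] [CharZero K]

/-- `rothe z x k = x / (x + k z) * C(x + k z, k)`, with the division carried out. -/
noncomputable def rothe (z x : K) : ℕ → K
  | 0 => 1
  | k + 1 => x / (k + 1) * Ring.choose (x + (k + 1) * z - 1) k

@[fun_prop]
theorem IsPolynomialFun.rothe (z : K) (k : ℕ) : IsPolynomialFun fun x => rothe z x k := by
  cases k <;> dsimp only [_root_.rothe] <;> fun_prop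

theorem rothe_add_one_succ (z x : K) (k : ℕ) :
    rothe z (x + 1) (k + 1) = rothe z x (k + 1) + rothe z (x + z) k := by
  cases k with
  | zero => simp [rothe]
  | succ j =>
    have hj : (j : K) + 1 ≠ 0 := Nat.cast_add_one_ne_zero j
    have hj' : (j : K) + 1 + 1 ≠ 0 := by exact_mod_cast Nat.succ_ne_zero (j + 1)
    have hback := Ring.choose_succ_right_eq (x + (j + 1 + 1) * z - 1) j
    rw [nsmul_eq_mul] at hback
    push_cast at hback
    simp only [rothe]
    push_cast
    rw [show x + 1 + (j + 1 + 1) * z - 1 = x + (j + 1 + 1) * z - 1 + 1 by ring,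
      Ring.choose_succ_succ, show x + z + (j + 1) * z - 1 = x + (j + 1 + 1) * z - 1 by ring]
    field_simp
    linear_combination hback

theorem sum_antidiagonal_rothe_add_one (x y z : K) (n : ℕ) :
    ∑ p ∈ antidiagonal (n + 1), rothe z (x + 1) p.1 * Ring.choose (y + p.2 * z) p.2 =
      ∑ p ∈ antidiagonal (n + 1), rothe z x p.1 * Ring.choose (y + p.2 * z) p.2 +
        ∑ p ∈ antidiagonal n, rothe z (x + z) p.1 * Ring.choose (y + p.2 * z) p.2 := by
  simp only [Nat.sum_antidiagonal_succ, rothe_add_one_succ, add_mul, sum_add_distrib, rothe.eq_1]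
  ring

/-- The Hagen–Rothe convolution identity. -/
theorem sum_antidiagonal_rothe_mul_choose (x y z : K) (n : ℕ) :
    ∑ p ∈ antidiagonal n, rothe z x p.1 * Ring.choose (y + p.2 * z) p.2 =
      Ring.choose (x + y + n * z) n := by
  induction n generalizing x with
  | zero => simp [rothe]
  | succ n ih =>
    let F : K → K := fun x => ∑ p ∈ antidiagonal (n + 1),
      rothe z x p.1 * Ring.choose (y + p.2 * z) p.2 - Ring.choose (x + y + (n + 1) * z) (n + 1)
    have hF : IsPolynomialFun F := by fun_prop
    have hper : Function.Periodic F 1 := fun x => by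
      simp only [F, sum_antidiagonal_rothe_add_one, ih]
      rw [show x + 1 + y + (n + 1) * z = x + y + (n + 1) * z + 1 by ring, Ring.choose_succ_succ,
        show x + z + y + n * z = x + y + (n + 1) * z by ring]
      ring
    have hF0 : F 0 = 0 := by simp [F, Nat.sum_antidiagonal_succ, rothe]
    push_cast
    exact sub_eq_zero.1 ((hF.apply_eq_apply_zero_of_periodic hper x).trans hF0)

theorem mul_sum_antidiagonal_choose_mul_choose (x w : K) (n : ℕ) :
    x * ∑ p ∈ antidiagonal n, Ring.choose (x + (p.1 + 1) * w - 1) p.1 / (p.1 + 1) *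
      Ring.choose (n - (p.1 + 1) * w) p.2 = Ring.choose (x + n) (n + 1) := by
  have hrothe := sum_antidiagonal_rothe_mul_choose x (n - (n + 1) * w) w (n + 1)
  have hfirst : Ring.choose ((n : K) - (n + 1) * w + (n + 1 : ℕ) * w) (n + 1) = 0 := by
    rw [show (n : K) - (n + 1) * w + (n + 1 : ℕ) * w = (n : ℕ) by push_cast; ring,
      Ring.choose_natCast, Nat.choose_succ_self, Nat.cast_zero]
  rw [Nat.sum_antidiagonal_succ, hfirst, mul_zero, zero_add,
    show x + (n - (n + 1) * w) + (n + 1 : ℕ) * w = x + n by push_cast; ring] at hrothe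
  rw [← hrothe, mul_sum]
  refine sum_congr rfl fun p hp => ?_
  have hn : (n : K) = p.1 + p.2 := by exact_mod_cast (mem_antidiagonal.1 hp).symm
  rw [show (n : K) - (n + 1) * w + p.2 * w = n - (p.1 + 1) * w by rw [hn]; ring, rothe]
  ring

theorem sum_antidiagonal_choose_mul_choose (w : K) (n : ℕ) :
    ∑ p ∈ antidiagonal n, Ring.choose ((p.1 + 1) * w - 1) p.1 / (p.1 + 1) *
      Ring.choose (n - (p.1 + 1) * w) p.2 = 1 / (n + 1) := by
  let G : K → K := fun x => ∑ p ∈ antidiagonal n, Ring.choose (x + (p.1 + 1) * w - 1) p.1 /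
      (p.1 + 1) * Ring.choose (n - (p.1 + 1) * w) p.2 - Ring.choose (x + n) n / (n + 1)
  have hG : IsPolynomialFun G := by fun_prop
  have hxG (x : K) : x * G x = 0 := by
    have hback := Ring.choose_succ_right_eq (x + n) n
    rw [nsmul_eq_mul, add_sub_cancel_right] at hback
    push_cast at hback
    rw [mul_sub, mul_sum_antidiagonal_choose_mul_choose, ← mul_div_assoc, mul_comm x, ← hback,
      mul_div_cancel_left₀ _ (Nat.cast_add_one_ne_zero n), sub_self]
  have hG0 := hG.eq_zero_of_infinite (Set.finite_singleton 0).infinite_compl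
    (fun x hx => (mul_eq_zero.1 (hxG x)).resolve_left hx) 0
  simpa [G, sub_eq_zero, Ring.choose_natCast] using hG0

theorem sum_Icc_neg_one_pow_div_mul_choose_mul_choose (z : K) (n : ℕ) :
    ∑ k ∈ Icc 1 (n + 1), (-1) ^ (k + 1) / k * Ring.choose (z * k - 1) (k - 1) *
      Ring.choose (n + (z - 1) * k) (n + 1 - k) = 1 / (n + 1) := by
  rw [sum_Icc_one_eq_sum_antidiagonal n (fun k j => (-1) ^ (k + 1) / k *
    Ring.choose (z * k - 1) (k - 1) * Ring.choose (n + (z - 1) * k) j),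
    ← sum_antidiagonal_choose_mul_choose (1 - z) n]
  refine sum_congr rfl fun p _ => ?_
  have hneg := Ring.choose_neg_eq ((p.1 + 1) * z - p.1) p.1
  rw [show -((p.1 + 1) * z - p.1) = (p.1 + 1) * (1 - z) - 1 by ring,
    show (p.1 + 1) * z - p.1 + p.1 - 1 = z * (p.1 + 1) - 1 by ring] at hneg
  push_cast
  rw [hneg, show (n : K) + (z - 1) * (p.1 + 1) = n - (p.1 + 1) * (1 - z) by ring]
  ring

theorem harmonic_eq_sum_Icc_choose_mul_choose (z : K) (n : ℕ) :
    (harmonic n : K) = ∑ k ∈ Icc 1 n, (-1) ^ (k + 1) / k * Ring.choose (z * k - 1) (k - 1) *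
      Ring.choose (n + (z - 1) * k) (n - k) := by
  induction n with
  | zero => simp
  | succ n ih =>
    have key := sum_Icc_neg_one_pow_div_mul_choose_mul_choose z n
    have pascal : ∑ k ∈ Icc 1 n, (-1) ^ (k + 1) / k * Ring.choose (z * k - 1) (k - 1) *
        Ring.choose ((n : K) + 1 + (z - 1) * k) (n + 1 - k) =
          ∑ k ∈ Icc 1 n, (-1) ^ (k + 1) / k * Ring.choose (z * k - 1) (k - 1) *
            Ring.choose (n + (z - 1) * k) (n - k) +
          ∑ k ∈ Icc 1 n, (-1) ^ (k + 1) / k * Ring.choose (z * k - 1) (k - 1) *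
            Ring.choose (n + (z - 1) * k) (n + 1 - k) := by
      rw [← sum_add_distrib]
      refine sum_congr rfl fun k hk => ?_
      rw [show n + 1 - k = n - k + 1 by have := (mem_Icc.1 hk).2; omega,
        show (n : K) + 1 + (z - 1) * k = n + (z - 1) * k + 1 by ring, Ring.choose_succ_succ]
      ring
    rw [sum_Icc_succ_top (by omega), Nat.sub_self, Ring.choose_zero_right] at key
    rw [harmonic_succ, sum_Icc_succ_top (by omega), Nat.sub_self, Ring.choose_zero_right]
    push_cast at key ⊢
    rw [pascal, ← ih]
    linear_combination -key

end Rothe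

theorem bala_identity_complex_general (m : ℂ) (hm : m ≠ 0) (n : ℕ) :
    (harmonic n : ℂ) = (1 / m) * ∑ k ∈ Finset.Icc 1 n,
      ((-1 : ℂ) ^ (k + 1) / (k : ℂ)) * gchooseC (m * k) k *
        gchooseC ((n : ℂ) + (m - 1) * k) (n - k) := by
  rw [harmonic_eq_sum_Icc_choose_mul_choose m n, mul_sum]
  refine sum_congr rfl fun k hk => ?_
  obtain ⟨j, rfl⟩ := Nat.exists_eq_add_of_le' (mem_Icc.1 hk).1
  have habsorb : Ring.choose (m * (j + 1)) (j + 1) = m * Ring.choose (m * (j + 1) - 1) j := by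
    have h := Ring.succ_mul_choose_eq (m * (j + 1) - 1) j
    rw [sub_add_cancel, nsmul_eq_mul] at h
    push_cast at h
    exact mul_left_cancel₀ (Nat.cast_add_one_ne_zero j) (by linear_combination -h)
  simp only [gchooseC_eq_choose, Nat.add_sub_cancel]
  push_cast
  rw [habsorb]
  field_simp

/-- Bala's identity for complex parameter `m ≠ 0`: for every `n ≥ 1`,
`H_n = (1/m) · Σ_{k=1}^{n} ((-1)^{k+1}/k) · C(mk, k) · C(n + (m-1)k, n-k)` in `ℂ`. -/
theorem bala_identity_complex (m : ℂ) (hm : m ≠ 0) (n : ℕ) (hn : 1 ≤ n) :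
    (harmonic n : ℂ) = (1 / m) * ∑ k ∈ Finset.Icc 1 n,
      ((-1 : ℂ) ^ (k + 1) / (k : ℂ)) * gchooseC (m * k) k *
        gchooseC ((n : ℂ) + (m - 1) * k) (n - k) :=
  bala_identity_complex_general m hm n
end

section
/- For every nonzero integer m, there exists a unique formal power series w ∈ ℚ[[u]] with zero constant coefficient satisfying w = u · (1 + w)^m, where for negative m the power (1 + w)^m is taken in the group of units of ℚ[[u]] (the series 1 + w is a unit since its constant coefficient is 1). -/
open PowerSeries

/-- Integer power of a formal power series over `ℚ`: for nonnegative exponents the ordinary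
power, for negative exponents the power of the inverse (`PowerSeries.inv`), which for a unit
(e.g. constant coefficient `1`) coincides with the power taken in the group of units. -/
noncomputable def psZpow (f : PowerSeries ℚ) (m : ℤ) : PowerSeries ℚ :=
  if 0 ≤ m then f ^ m.toNat else f⁻¹ ^ (-m).toNat

/-!
The map `w ↦ X * (1 + w)^m` is a contraction for the `X`-adic metric: powers and inverses
preserve congruences modulo `X^n`, and the factor `X` improves such a congruence to one modulo
`X^(n+1)`. As in Banach's theorem, the iterates of the map starting from `0` stabilise
coefficientwise to a fixed point, and two fixed points agree modulo every power of `X`.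
-/

open Function

namespace PowerSeries

section CommRing

variable {R : Type*} [CommRing R]

theorem eq_zero_of_forall_X_pow_dvd {f : R⟦X⟧} (h : ∀ n, (X : R⟦X⟧) ^ n ∣ f) : f = 0 := by
  ext k
  exact X_pow_dvd_iff.mp (h (k + 1)) k k.lt_succ_self

def IsXAdicContraction (Φ : R⟦X⟧ → R⟦X⟧) : Prop :=
  ∀ (n : ℕ) (f g : R⟦X⟧), (X : R⟦X⟧) ^ n ∣ f - g → X ^ (n + 1) ∣ Φ f - Φ g

/-- For an `X`-adic contraction, `Φ^[n'] 0 ≡ Φ^[n + 1] 0 [mod X^(n + 1)]` for all `n' > n`, so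
the `n`-th coefficient is already final at step `n + 1`. -/
noncomputable def limIterate (Φ : R⟦X⟧ → R⟦X⟧) : R⟦X⟧ :=
  mk fun n => coeff n (Φ^[n + 1] 0)

namespace IsXAdicContraction

variable {Φ : R⟦X⟧ → R⟦X⟧} (hΦ : IsXAdicContraction Φ)
include hΦ

theorem X_pow_dvd_sub_of_isFixedPt {f g : R⟦X⟧} (hf : IsFixedPt Φ f) (hg : IsFixedPt Φ g)
    (n : ℕ) : (X : R⟦X⟧) ^ n ∣ f - g := by
  induction n with
  | zero => simp
  | succ n ih => simpa only [hf.eq, hg.eq] using hΦ n f g ih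

theorem eq_of_isFixedPt {f g : R⟦X⟧} (hf : IsFixedPt Φ f) (hg : IsFixedPt Φ g) : f = g :=
  sub_eq_zero.mp (eq_zero_of_forall_X_pow_dvd (hΦ.X_pow_dvd_sub_of_isFixedPt hf hg))

theorem X_pow_dvd_iterate_succ_sub (n : ℕ) :
    (X : R⟦X⟧) ^ n ∣ Φ^[n + 1] 0 - Φ^[n] 0 := by
  induction n with
  | zero => simp
  | succ n ih => simpa only [iterate_succ_apply'] using hΦ n _ _ ih

theorem X_pow_dvd_iterate_sub {n n' : ℕ} (h : n ≤ n') :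
    (X : R⟦X⟧) ^ n ∣ Φ^[n'] 0 - Φ^[n] 0 := by
  induction n', h using Nat.le_induction with
  | base => simp
  | succ n' hn' ih =>
    rw [← sub_add_sub_cancel]
    exact dvd_add ((pow_dvd_pow X hn').trans (hΦ.X_pow_dvd_iterate_succ_sub n')) ih

theorem X_pow_dvd_limIterate_sub (n : ℕ) : (X : R⟦X⟧) ^ n ∣ limIterate Φ - Φ^[n] 0 := by
  refine X_pow_dvd_iff.mpr fun k hk => ?_
  have hcoeff := X_pow_dvd_iff.mp (hΦ.X_pow_dvd_iterate_sub hk) k k.lt_succ_self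
  rw [map_sub, sub_eq_zero] at hcoeff
  rw [map_sub, limIterate, coeff_mk, hcoeff, sub_self]

theorem isFixedPt_limIterate : IsFixedPt Φ (limIterate Φ) := by
  refine sub_eq_zero.mp (eq_zero_of_forall_X_pow_dvd fun n => ?_)
  have hΦw : X ^ (n + 1) ∣ Φ (limIterate Φ) - Φ^[n + 1] 0 := by
    rw [iterate_succ_apply']
    exact hΦ n _ _ (hΦ.X_pow_dvd_limIterate_sub n)
  rw [← sub_sub_sub_cancel_right _ _ (Φ^[n + 1] 0)]
  exact (pow_dvd_pow X n.le_succ).trans (dvd_sub hΦw (hΦ.X_pow_dvd_limIterate_sub (n + 1)))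

theorem existsUnique_isFixedPt : ∃! w, IsFixedPt Φ w :=
  ⟨limIterate Φ, hΦ.isFixedPt_limIterate, fun _ hv => hΦ.eq_of_isFixedPt hv hΦ.isFixedPt_limIterate⟩

end IsXAdicContraction

end CommRing

theorem X_pow_dvd_inv_sub_inv {k : Type*} [Field k] {f g : k⟦X⟧} {n : ℕ}
    (h : (X : k⟦X⟧) ^ n ∣ f - g) : (X : k⟦X⟧) ^ n ∣ f⁻¹ - g⁻¹ := by
  cases n with
  | zero => simp
  | succ n =>
    have hc : constantCoeff f = constantCoeff g := by
      rw [← sub_eq_zero, ← map_sub, ← X_dvd_iff]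
      exact (dvd_pow_self X n.succ_ne_zero).trans h
    by_cases hg : constantCoeff g = 0
    · simp [inv_eq_zero.mpr hg, inv_eq_zero.mpr (hc.trans hg)]
    · have hf : constantCoeff f ≠ 0 := hc ▸ hg
      have hinv : f⁻¹ - g⁻¹ = f⁻¹ * (g - f) * g⁻¹ := by
        calc f⁻¹ - g⁻¹ = f⁻¹ * (g * g⁻¹) - (f * f⁻¹) * g⁻¹ := by
              rw [PowerSeries.mul_inv_cancel f hf, PowerSeries.mul_inv_cancel g hg]; ring
          _ = f⁻¹ * (g - f) * g⁻¹ := by ring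
      rw [hinv]
      exact (dvd_sub_comm.mp h).mul_left _ |>.mul_right _

end PowerSeries

theorem X_pow_dvd_psZpow_sub_psZpow {f g : ℚ⟦X⟧} {n : ℕ} (h : (X : ℚ⟦X⟧) ^ n ∣ f - g)
    (m : ℤ) : (X : ℚ⟦X⟧) ^ n ∣ psZpow f m - psZpow g m := by
  unfold psZpow
  split_ifs
  · exact h.trans (sub_dvd_pow_sub_pow _ _ _)
  · exact (X_pow_dvd_inv_sub_inv h).trans (sub_dvd_pow_sub_pow _ _ _)

theorem isXAdicContraction_X_mul_psZpow (m : ℤ) :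
    IsXAdicContraction fun w : ℚ⟦X⟧ => X * psZpow (1 + w) m := by
  intro n f g h
  rw [← mul_sub, pow_succ']
  exact mul_dvd_mul_left X (X_pow_dvd_psZpow_sub_psZpow (by simpa using h) m)

theorem exists_unique_fixed_point_general (m : ℤ) :
    ∃! w : PowerSeries ℚ, constantCoeff w = 0 ∧ w = X * psZpow (1 + w) m := by
  obtain ⟨w, hw, hunique⟩ := (isXAdicContraction_X_mul_psZpow m).existsUnique_isFixedPt
  refine ⟨w, ⟨?_, hw.symm⟩, fun v hv => hunique v hv.2.symm⟩
  rw [← hw.eq]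
  simp

/-- For every nonzero integer `m`, there is a unique formal power series `w ∈ ℚ[[u]]` with zero
constant coefficient satisfying `w = u · (1 + w)^m`. -/
theorem exists_unique_fixed_point (m : ℤ) (hm : m ≠ 0) :
    ∃! w : PowerSeries ℚ, constantCoeff w = 0 ∧ w = X * psZpow (1 + w) m :=
  exists_unique_fixed_point_general m
end

section
/- Let m be a nonzero integer and let v ∈ ℚ[[u]] be a formal power series with zero constant coefficient satisfying v = u·(1 − v)^m. Let S = Σ_{k≥1} ((−1)^{k+1}/k)·C(m·k, k)·u^k ∈ ℚ[[u]]. Then (1 − v) · S' = m · v', where ' denotes the formal derivative. Equivalently, S = −m·log(1 − v) as formal power series. -/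
open PowerSeries

/-!
Write `w = 1 - v`, a unit with `w = 1 - X w^m`, so that `w^(r+1) = w^r - X w^(m+r)` for every
integer `r`. Comparing coefficients, this recurrence determines `[X^n] w^r` as
`(-1)^n (r/n) C(mn + r - 1, n - 1)` (Lagrange inversion), which turns the coefficient formula of
`S'` into `S' = m w^m + (m - 1) X (w^m)'`. The identity then follows from the logarithmic
derivative `w (w^m)' = m w^m w'` together with `w' = -(X w^m)'`.
-/

theorem Derivation.units_mul_map_zpow {R A : Type*} [CommRing R] [CommRing A] [Algebra R A]
    (D : Derivation R A A) (u : Aˣ) (n : ℤ) :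
    ↑u * D ↑(u ^ n) = n * ↑(u ^ n) * D ↑u := by
  induction n using Int.induction_on with
  | zero => simp
  | succ k ih =>
    rw [zpow_add_one, Units.val_mul, D.leibniz, smul_eq_mul, smul_eq_mul]
    push_cast at ih ⊢
    linear_combination (u : A) * ih
  | pred k ih =>
    have hsplit : (↑(u ^ (-(k : ℤ))) : A) = ↑(u ^ (-(k : ℤ) - 1)) * ↑u := by
      rw [← Units.val_mul, ← zpow_add_one, sub_add_cancel]
    rw [hsplit, D.leibniz, smul_eq_mul, smul_eq_mul] at ih
    apply u.isUnit.mul_left_cancel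
    push_cast at ih ⊢
    linear_combination ih

theorem Int.eq_of_apply_zero_eq_of_sub_eq_sub {G : Type*} [AddCommGroup G] {f g : ℤ → G}
    (h₀ : f 0 = g 0) (h : ∀ r, f (r + 1) - f r = g (r + 1) - g r) : f = g := by
  funext r
  induction r using Int.induction_on with
  | zero => exact h₀
  | succ k ih => rw [← sub_add_cancel (f _) (f k), h, ih, sub_add_cancel]
  | pred k ih =>
    have hk := h (-k - 1)
    rw [sub_add_cancel, ih] at hk
    exact sub_right_inj.mp hk

@[simp]
theorem gchoose_zero (a : ℚ) : gchoose a 0 = 1 := by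
  simp [gchoose]

theorem gchoose_succ_mul (a : ℚ) (b : ℕ) :
    gchoose a (b + 1) * (b + 1) = gchoose a b * (a - b) := by
  simp only [gchoose, Finset.prod_range_succ, Nat.factorial_succ]
  push_cast
  field_simp

theorem gchoose_succ_mul' (a : ℚ) (b : ℕ) :
    gchoose a (b + 1) * (b + 1) = a * gchoose (a - 1) b := by
  have hshift :
      ∏ i ∈ Finset.range b, (a - ((i + 1 : ℕ) : ℚ)) = ∏ i ∈ Finset.range b, (a - 1 - i) :=
    Finset.prod_congr rfl fun i _ => by push_cast; ring
  simp only [gchoose, Finset.prod_range_succ', hshift, Nat.factorial_succ]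
  push_cast
  field_simp
  ring

-- Lagrange inversion gives `(r/n) C(cn + r - 1, n - 1)` rather than `r/(cn + r) C(cn + r, n)`,
-- which would break down at `cn + r = 0`.
noncomputable def lagrangePowCoeff (c r : ℚ) : ℕ → ℚ
  | 0 => 1
  | n + 1 => (-1) ^ (n + 1) * r / (n + 1) * gchoose (c * (n + 1) + r - 1) n

@[simp]
theorem lagrangePowCoeff_zero (c r : ℚ) : lagrangePowCoeff c r 0 = 1 := rfl

@[simp]
theorem lagrangePowCoeff_zero_succ (c : ℚ) (n : ℕ) : lagrangePowCoeff c 0 (n + 1) = 0 := by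
  simp [lagrangePowCoeff]

theorem lagrangePowCoeff_add_one_succ (c r : ℚ) (n : ℕ) :
    lagrangePowCoeff c (r + 1) (n + 1) =
      lagrangePowCoeff c r (n + 1) - lagrangePowCoeff c (c + r) n := by
  cases n with
  | zero => simp only [lagrangePowCoeff, gchoose_zero, Nat.cast_zero]; ring
  | succ k =>
    set B := c * (k + 2) + r
    have hB : c * ((k + 1 : ℕ) + 1 : ℚ) + (r + 1) - 1 = B := by push_cast; ring
    have hB' : c * ((k + 1 : ℕ) + 1 : ℚ) + r - 1 = B - 1 := by push_cast; ring
    have hB'' : c * ((k : ℚ) + 1) + (c + r) - 1 = B - 1 := by ring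
    simp only [lagrangePowCoeff, hB, hB', hB'']
    have h1 := gchoose_succ_mul' B k
    have h2 := gchoose_succ_mul (B - 1) k
    have hk : (k : ℚ) + 1 ≠ 0 := by positivity
    have hk' : ((k + 1 : ℕ) : ℚ) + 1 ≠ 0 := by positivity
    field_simp
    push_cast at *
    linear_combination (-1) ^ k * ((r + 1) * h1 - r * h2)

theorem neg_one_pow_mul_gchoose (c : ℚ) (k : ℕ) :
    (-1) ^ k * gchoose (c * (k + 1)) (k + 1) = (c + (c - 1) * k) * lagrangePowCoeff c c k := by
  cases k with
  | zero => simpa using gchoose_succ_mul' c 0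
  | succ k =>
    set B := c * (k + 2)
    have hB : c * ((k + 1 : ℕ) + 1 : ℚ) = B := by push_cast; ring
    have hB' : c * ((k : ℚ) + 1) + c - 1 = B - 1 := by ring
    simp only [lagrangePowCoeff, hB, hB']
    have h1 := gchoose_succ_mul' B (k + 1)
    have h2 := gchoose_succ_mul (B - 1) k
    have hk : (k : ℚ) + 1 ≠ 0 := by positivity
    have hk' : ((k + 1 : ℕ) : ℚ) + 1 ≠ 0 := by positivity
    field_simp
    push_cast at *
    apply mul_left_cancel₀ hk'
    linear_combination (k + 1) * h1 + B * h2

theorem psZpow_val_eq_val_zpow (w : ℚ⟦X⟧ˣ) (m : ℤ) : psZpow ↑w m = ↑(w ^ m) := by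
  have hinv : (↑w⁻¹ : ℚ⟦X⟧) = (↑w)⁻¹ :=
    (eq_inv_iff_mul_eq_one (isUnit_constantCoeff _ w.isUnit).ne_zero).mpr w.inv_mul
  unfold psZpow
  split_ifs with hm
  · rw [← Units.val_pow_eq_pow_val, ← zpow_natCast, Int.toNat_of_nonneg hm]
  · rw [← hinv, ← Units.val_pow_eq_pow_val, ← zpow_natCast, Int.toNat_of_nonneg (by omega),
      inv_zpow', neg_neg]

noncomputable def logSeries (m : ℚ) : ℚ⟦X⟧ :=
  mk fun k => if k = 0 then 0 else (-1) ^ (k + 1) / k * gchoose (m * k) k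

theorem coeff_derivative_logSeries (m : ℚ) (k : ℕ) :
    coeff k (derivative ℚ (logSeries m)) = (-1) ^ k * gchoose (m * (k + 1)) (k + 1) := by
  have hk : (k : ℚ) + 1 ≠ 0 := by positivity
  rw [coeff_derivative, logSeries, coeff_mk, if_neg k.succ_ne_zero]
  push_cast
  field_simp
  ring

section LagrangeSeries

variable {c : ℤ} {w : ℚ⟦X⟧ˣ} (hw : (w : ℚ⟦X⟧) = 1 - X * ((w ^ c : ℚ⟦X⟧ˣ) : ℚ⟦X⟧))
include hw

theorem val_zpow_add_one_of_eq (r : ℤ) :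
    ((w ^ (r + 1) : ℚ⟦X⟧ˣ) : ℚ⟦X⟧) =
      ((w ^ r : ℚ⟦X⟧ˣ) : ℚ⟦X⟧) - X * ((w ^ (c + r) : ℚ⟦X⟧ˣ) : ℚ⟦X⟧) := by
  rw [zpow_add_one, Units.val_mul, hw, zpow_add, Units.val_mul]
  ring

theorem coeff_val_zpow_of_eq (n : ℕ) (r : ℤ) :
    coeff n ((w ^ r : ℚ⟦X⟧ˣ) : ℚ⟦X⟧) = lagrangePowCoeff c r n := by
  induction n generalizing r with
  | zero =>
    refine congrFun (Int.eq_of_apply_zero_eq_of_sub_eq_sub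
      (f := fun r ↦ coeff 0 ((w ^ r : ℚ⟦X⟧ˣ) : ℚ⟦X⟧)) (g := fun _ ↦ 1) (by simp) fun r ↦ ?_) r
    simp [val_zpow_add_one_of_eq hw r]
  | succ n ih =>
    refine congrFun (Int.eq_of_apply_zero_eq_of_sub_eq_sub
      (f := fun r ↦ coeff (n + 1) ((w ^ r : ℚ⟦X⟧ˣ) : ℚ⟦X⟧))
      (g := fun r : ℤ ↦ lagrangePowCoeff c r (n + 1)) (by simp [coeff_one]) fun r ↦ ?_) r
    simp only [val_zpow_add_one_of_eq hw r, map_sub, coeff_succ_X_mul, ih, Int.cast_add,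
      Int.cast_one, lagrangePowCoeff_add_one_succ]
    ring

theorem derivative_logSeries_of_eq :
    derivative ℚ (logSeries c) = C (c : ℚ) * ((w ^ c : ℚ⟦X⟧ˣ) : ℚ⟦X⟧) +
      C ((c : ℚ) - 1) * (X * derivative ℚ ((w ^ c : ℚ⟦X⟧ˣ) : ℚ⟦X⟧)) := by
  ext k
  rw [coeff_derivative_logSeries, neg_one_pow_mul_gchoose, map_add, coeff_C_mul, coeff_C_mul,
    coeff_val_zpow_of_eq hw]
  cases k with
  | zero => simp
  | succ k =>
    rw [coeff_succ_X_mul, coeff_derivative, coeff_val_zpow_of_eq hw]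
    push_cast
    ring

theorem val_mul_derivative_logSeries_of_eq :
    (w : ℚ⟦X⟧) * derivative ℚ (logSeries c) =
      C (c : ℚ) * derivative ℚ (X * ((w ^ c : ℚ⟦X⟧ˣ) : ℚ⟦X⟧)) := by
  have hpow := (derivative ℚ).units_mul_map_zpow w c
  rw [derivative_logSeries_of_eq hw, map_sub, map_one, Derivation.leibniz, derivative_X,
    smul_eq_mul, smul_eq_mul]
  rw [hw, map_sub, Derivation.map_one_eq_zero, zero_sub, Derivation.leibniz, derivative_X,
    smul_eq_mul, smul_eq_mul, ← hw, ← map_intCast (C : ℚ →+* ℚ⟦X⟧)] at hpow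
  set W := ((w ^ c : ℚ⟦X⟧ˣ) : ℚ⟦X⟧)
  linear_combination (-X) * hpow + C (c : ℚ) * (W + X * derivative ℚ W) * hw

end LagrangeSeries

theorem lagrange_log_identity_alt_general (m : ℤ) (v : PowerSeries ℚ)
    (hv0 : constantCoeff v = 0) (hv : v = X * psZpow (1 - v) m)
    (S : PowerSeries ℚ)
    (hS : S = PowerSeries.mk fun k =>
      if k = 0 then 0 else (-1 : ℚ) ^ (k + 1) / k * gchoose ((m : ℚ) * k) k) :
    (1 - v) * (PowerSeries.derivative ℚ S) =
      PowerSeries.C (m : ℚ) * (PowerSeries.derivative ℚ v) := by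
  obtain ⟨w, hw⟩ : IsUnit (1 - v) := isUnit_iff_constantCoeff.mpr (by simp [hv0])
  rw [← hw, psZpow_val_eq_val_zpow] at hv
  subst hv hS
  rw [← hw]
  exact val_mul_derivative_logSeries_of_eq hw

/-- If `v ∈ ℚ[[u]]` has zero constant coefficient and satisfies `v = u(1−v)^m`, and
`S = Σ_{k≥1} ((−1)^{k+1}/k)·C(mk, k)·u^k`, then `(1 − v) · S' = m · v'`
(the differential form of `S = −m·log(1−v)`). -/
theorem lagrange_log_identity_alt (m : ℤ) (hm : m ≠ 0) (v : PowerSeries ℚ)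
    (hv0 : constantCoeff v = 0) (hv : v = X * psZpow (1 - v) m)
    (S : PowerSeries ℚ)
    (hS : S = PowerSeries.mk fun k =>
      if k = 0 then 0 else (-1 : ℚ) ^ (k + 1) / k * gchoose ((m : ℚ) * k) k) :
    (1 - v) * (PowerSeries.derivative ℚ S) =
      PowerSeries.C (m : ℚ) * (PowerSeries.derivative ℚ v) :=
  lagrange_log_identity_alt_general m v hv0 hv S hS
end

section
/- Let m be a nonzero integer and let w ∈ ℚ[[u]] be a formal power series with zero constant coefficient satisfying w = u·(1 + w)^m. Then (1 + (1 − m)·w) · Σ_{k≥1} C(m·k, k)·u^k = m·w in ℚ[[u]]. -/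
/-!
Put `B = 1 + w`, a unit with `B = 1 + u B ^ m`. Then `B ^ r = B ^ (r - 1) + u B ^ (r - 1 + m)` for
every integer `r`, and induction on the degree, and inside it on `r`, gives the Lagrange inversion
formula `[u ^ (n + 1)] B ^ r = r / (n + 1) * C(m (n + 1) + r - 1, n)`. For `r = m` this says
`k [u ^ k] w = C(m k, k - 1)`, hence `Σ C(m k, k) u ^ k = (m - 1) u w' + w`. Differentiating
`w = u B ^ m` gives `u w' (1 + (1 - m) w) = w (1 + w)`, and the identity follows by algebra.
-/

open PowerSeries

theorem gchoose_succ_right_eq (a : ℚ) (n : ℕ) :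
    gchoose a (n + 1) * (n + 1) = gchoose a n * (a - n) := by
  simp only [gchoose, Finset.prod_range_succ, Nat.factorial_succ, Nat.cast_mul]
  field_simp
  push_cast
  ring

theorem mul_gchoose_sub_one_eq (a : ℚ) (n : ℕ) :
    a * gchoose (a - 1) n = gchoose a (n + 1) * (n + 1) := by
  simp only [gchoose, Finset.prod_range_succ', Nat.factorial_succ, Nat.cast_mul]
  field_simp
  push_cast
  simp only [sub_sub, add_comm (1 : ℚ), sub_zero]
  ring

/-- `lagrangeCoeff m r n` is the coefficient of `u ^ n` in `B ^ r` when `B = 1 + u B ^ m`. -/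
noncomputable def lagrangeCoeff (m r : ℚ) : ℕ → ℚ
  | 0 => 1
  | n + 1 => r / (n + 1) * gchoose (m * (n + 1) + r - 1) n

theorem lagrangeCoeff_succ (m r : ℚ) (n : ℕ) :
    lagrangeCoeff m r (n + 1) =
      lagrangeCoeff m (r - 1) (n + 1) + lagrangeCoeff m (r - 1 + m) n := by
  cases n with
  | zero => simp [lagrangeCoeff, gchoose]
  | succ n =>
    set a := m * (n + 2) + r - 2 with ha
    have h₁ := mul_gchoose_sub_one_eq (a + 1) n
    have h₂ := gchoose_succ_right_eq a n
    simp only [lagrangeCoeff, add_sub_cancel_right] at h₁ ⊢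
    push_cast at h₁ ⊢
    rw [show m * (n + 1 + 1) + r - 1 = a + 1 by ring, show m * (n + 1 + 1) + (r - 1) - 1 = a by ring,
      show m * (n + 1) + (r - 1 + m) - 1 = a by ring]
    field_simp
    linear_combination -r * h₁ - (r - 1) * h₂ + gchoose a n * ha

theorem gchoose_mul_succ_eq_lagrangeCoeff (m : ℚ) (n : ℕ) :
    gchoose (m * (n + 1)) (n + 1) = ((m - 1) * (n + 1) + 1) * lagrangeCoeff m m n := by
  cases n with
  | zero => simp [lagrangeCoeff, gchoose]
  | succ n =>
    set a := m * (n + 2) with ha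
    have h₁ := mul_gchoose_sub_one_eq a (n + 1)
    have h₂ := gchoose_succ_right_eq (a - 1) n
    simp only [lagrangeCoeff]
    push_cast at h₁ ⊢
    rw [show m * (n + 1 + 1) = a by ring, show m * (n + 1) + m - 1 = a - 1 by ring]
    have hn : (n : ℚ) + 1 + 1 ≠ 0 := by positivity
    have hX : gchoose a (n + 1 + 1) = m * gchoose (a - 1) (n + 1) :=
      mul_right_cancel₀ hn (by linear_combination -h₁ + gchoose (a - 1) (n + 1) * ha)
    field_simp
    linear_combination (n + 1 : ℚ) * hX + m * h₂ - m * gchoose (a - 1) n * ha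

theorem psZpow_units_val (U : ℚ⟦X⟧ˣ) (m : ℤ) : psZpow U m = ↑(U ^ m) := by
  have hinv : (U : ℚ⟦X⟧)⁻¹ = ↑U⁻¹ :=
    (Units.inv_eq_of_mul_eq_one_right
      (PowerSeries.mul_inv_cancel _ (U.isUnit.map constantCoeff).ne_zero)).symm
  unfold psZpow
  split_ifs with hm
  · lift m to ℕ using hm
    simp
  · obtain ⟨n, rfl⟩ : ∃ n : ℕ, m = -n := ⟨(-m).toNat, by omega⟩
    simp [hinv]

theorem constantCoeff_val_zpow {R : Type*} [CommRing R] {U : (PowerSeries R)ˣ}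
    (hU : constantCoeff (U : PowerSeries R) = 1) (k : ℤ) :
    constantCoeff (↑(U ^ k) : PowerSeries R) = 1 := by
  have h : Units.map constantCoeff.toMonoidHom U = 1 := Units.ext hU
  have h' : constantCoeff (↑(U ^ k) : PowerSeries R) =
      ↑(Units.map constantCoeff.toMonoidHom (U ^ k)) := (Units.coe_map _ _).symm
  rw [h', map_zpow, h, one_zpow, Units.val_one]

theorem Derivation.units_mul_leibniz_zpow {R A : Type*} [CommSemiring R] [CommRing A]
    [Algebra R A] (D : Derivation R A A) (u : Aˣ) (k : ℤ) :
    ↑u * D ↑(u ^ k) = k * ↑(u ^ k) * D ↑u := by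
  induction k using Int.induction_on with
  | zero => simp
  | succ k ih =>
    rw [zpow_add_one, Units.val_mul, D.leibniz, smul_eq_mul, smul_eq_mul]
    push_cast at ih ⊢
    linear_combination ↑u * ih
  | pred k ih =>
    have hpow : (↑(u ^ (-(k : ℤ))) : A) = ↑(u ^ (-(k : ℤ) - 1)) * ↑u := by
      rw [← Units.val_mul, ← zpow_add_one, sub_add_cancel]
    have h := congrArg D hpow
    rw [D.leibniz, smul_eq_mul, smul_eq_mul] at h
    refine u.isUnit.mul_left_cancel ?_
    push_cast at ih ⊢
    linear_combination ih - ↑u * h - k * D ↑u * hpow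

section LagrangeInversion

variable {m : ℤ} {B : ℚ⟦X⟧ˣ} {w : ℚ⟦X⟧}

theorem val_zpow_eq_add (hw : w = (X : ℚ⟦X⟧) * ↑(B ^ m)) (hB : (B : ℚ⟦X⟧) = 1 + w) (r : ℤ) :
    (↑(B ^ r) : ℚ⟦X⟧) = ↑(B ^ (r - 1)) + (X : ℚ⟦X⟧) * ↑(B ^ (r - 1 + m)) := by
  calc (↑(B ^ r) : ℚ⟦X⟧) = ↑(B ^ (r - 1)) * ↑B := by
        rw [← Units.val_mul, ← zpow_add_one, sub_add_cancel]
    _ = _ := by rw [hB, hw, zpow_add, Units.val_mul]; ring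

theorem coeff_val_zpow (hw : w = (X : ℚ⟦X⟧) * ↑(B ^ m)) (hB : (B : ℚ⟦X⟧) = 1 + w)
    (n : ℕ) (r : ℤ) :
    coeff n (↑(B ^ r) : ℚ⟦X⟧) = lagrangeCoeff m r n := by
  induction n generalizing r with
  | zero =>
    have hB₀ : constantCoeff (B : ℚ⟦X⟧) = 1 := by simp [hB, hw]
    simp [constantCoeff_val_zpow hB₀, lagrangeCoeff]
  | succ n ih =>
    have step : ∀ r : ℤ, coeff (n + 1) (↑(B ^ r) : ℚ⟦X⟧) - lagrangeCoeff m r (n + 1) =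
        coeff (n + 1) (↑(B ^ (r - 1)) : ℚ⟦X⟧) - lagrangeCoeff m ↑(r - 1) (n + 1) := by
      intro r
      rw [val_zpow_eq_add hw hB r, map_add, coeff_succ_X_mul, ih, lagrangeCoeff_succ]
      push_cast
      ring
    rw [← sub_eq_zero]
    induction r using Int.induction_on with
    | zero => simp [lagrangeCoeff]
    | succ k ihk => rwa [step, add_sub_cancel_right]
    | pred k ihk => rwa [← step]

theorem X_mul_derivative_mul_eq (hw : w = (X : ℚ⟦X⟧) * ↑(B ^ m)) (hB : (B : ℚ⟦X⟧) = 1 + w) :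
    X * d⁄dX ℚ w * (1 + C (1 - (m : ℚ)) * w) = w * (1 + w) := by
  have hlog := (d⁄dX ℚ).units_mul_leibniz_zpow B m
  have hdw : d⁄dX ℚ w = (↑(B ^ m) : ℚ⟦X⟧) + X * d⁄dX ℚ (↑(B ^ m) : ℚ⟦X⟧) := by
    conv_lhs => rw [hw]
    rw [Derivation.leibniz, smul_eq_mul, smul_eq_mul, derivative_X, mul_one, add_comm]
  have hdB : d⁄dX ℚ (B : ℚ⟦X⟧) = d⁄dX ℚ w := by simp [hB]
  rw [hdB, hB] at hlog
  rw [map_sub, map_one, map_intCast]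
  linear_combination X * (1 + w) * hdw + X ^ 2 * hlog - (1 + w + m * X * d⁄dX ℚ w) * hw

theorem mk_gchoose_eq_X_mul_derivative_add (hw : w = (X : ℚ⟦X⟧) * ↑(B ^ m))
    (hB : (B : ℚ⟦X⟧) = 1 + w) :
    (mk fun k => if k = 0 then 0 else gchoose ((m : ℚ) * k) k) =
      C ((m : ℚ) - 1) * (X * d⁄dX ℚ w) + w := by
  ext (_ | n)
  · simp [hw]
  · have hwn : coeff (n + 1) w = lagrangeCoeff m m n := by
      rw [hw, coeff_succ_X_mul, coeff_val_zpow hw hB]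
    rw [coeff_mk, if_neg n.succ_ne_zero, map_add, coeff_C_mul, coeff_succ_X_mul, coeff_derivative,
      hwn, Nat.cast_succ, gchoose_mul_succ_eq_lagrangeCoeff]
    ring

end LagrangeInversion

theorem generating_function_identity_tail_general (m : ℤ) (w : PowerSeries ℚ)
    (hw : w = X * psZpow (1 + w) m) :
    (1 + PowerSeries.C (1 - (m : ℚ)) * w) *
        (PowerSeries.mk fun k => if k = 0 then 0 else gchoose ((m : ℚ) * k) k) =
      PowerSeries.C (m : ℚ) * w := by
  have hunit : IsUnit (1 + w) := by
    have hw₀ : constantCoeff w = 0 := by rw [hw, map_mul, constantCoeff_X, zero_mul]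
    simp [isUnit_iff_constantCoeff, hw₀]
  set B := hunit.unit
  have hB : (B : ℚ⟦X⟧) = 1 + w := hunit.unit_spec
  have hwB : w = (X : ℚ⟦X⟧) * ↑(B ^ m) := by rw [← psZpow_units_val, hB]; exact hw
  rw [mk_gchoose_eq_X_mul_derivative_add hwB hB]
  have hderiv := X_mul_derivative_mul_eq hwB hB
  simp only [map_sub, map_one] at hderiv ⊢
  linear_combination (C (m : ℚ) - 1) * hderiv

/-- If `w` has zero constant coefficient and satisfies `w = u(1+w)^m`, then
`(1 + (1−m)w) · Σ_{k≥1} C(mk, k) u^k = m·w`. -/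
theorem generating_function_identity_tail (m : ℤ) (hm : m ≠ 0) (w : PowerSeries ℚ)
    (hw0 : constantCoeff w = 0) (hw : w = X * psZpow (1 + w) m) :
    (1 + PowerSeries.C (1 - (m : ℚ)) * w) *
        (PowerSeries.mk fun k => if k = 0 then 0 else gchoose ((m : ℚ) * k) k) =
      PowerSeries.C (m : ℚ) * w :=
  generating_function_identity_tail_general m w hw
end

section
/- Let m be a nonzero integer and define G on formal power series with zero constant coefficient by G(ξ) = (x/(1−x)^m)·(1 − ξ)^m, i.e., G(ξ) is x·(1−x)^{−m}·(1 − ξ)^m ∈ ℚ[[x]]. Then G is a strict contraction in the x-adic sense: for every N ≥ 1 and all ξ₁, ξ₂ ∈ ℚ[[x]] with zero constant coefficient, if x^N divides ξ₁ − ξ₂ then x^{N+1} divides G(ξ₁) − G(ξ₂). -/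
open PowerSeries

theorem PowerSeries.sub_dvd_inv_sub_inv {k : Type*} [Field k] {f g : PowerSeries k}
    (hf : constantCoeff f ≠ 0) (hg : constantCoeff g ≠ 0) : f - g ∣ f⁻¹ - g⁻¹ :=
  ⟨-(f⁻¹ * g⁻¹), by
    linear_combination g⁻¹ * PowerSeries.mul_inv_cancel f hf -
      f⁻¹ * PowerSeries.mul_inv_cancel g hg⟩

theorem sub_dvd_psZpow_sub_psZpow {f g : PowerSeries ℚ}
    (hf : constantCoeff f ≠ 0) (hg : constantCoeff g ≠ 0) (m : ℤ) :
    f - g ∣ psZpow f m - psZpow g m := by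
  unfold psZpow
  split_ifs
  · exact sub_dvd_pow_sub_pow _ _ _
  · exact (sub_dvd_inv_sub_inv hf hg).trans (sub_dvd_pow_sub_pow _ _ _)

theorem contraction_general (m : ℤ) (N : ℕ)
    (ξ₁ ξ₂ : PowerSeries ℚ)
    (h₁ : constantCoeff ξ₁ = 0) (h₂ : constantCoeff ξ₂ = 0)
    (hdvd : (X : PowerSeries ℚ) ^ N ∣ ξ₁ - ξ₂) :
    (X : PowerSeries ℚ) ^ (N + 1) ∣
      X * psZpow (1 - X) (-m) * psZpow (1 - ξ₁) m -
        X * psZpow (1 - X) (-m) * psZpow (1 - ξ₂) m := by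
  have hsub : (X : PowerSeries ℚ) ^ N ∣ (1 - ξ₁) - (1 - ξ₂) := by
    rwa [sub_sub_sub_cancel_left, dvd_sub_comm]
  have key : (X : PowerSeries ℚ) ^ N ∣ psZpow (1 - ξ₁) m - psZpow (1 - ξ₂) m :=
    hsub.trans (sub_dvd_psZpow_sub_psZpow (by simp [h₁]) (by simp [h₂]) m)
  rw [← mul_sub, pow_succ']
  exact mul_dvd_mul (dvd_mul_right _ _) key

/-- The map `G(ξ) = x·(1−x)^{−m}·(1−ξ)^m` is a strict contraction in the `x`-adic sense:
if `x^N ∣ ξ₁ − ξ₂` (with `N ≥ 1` and `ξ₁, ξ₂` of zero constant coefficient),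
then `x^{N+1} ∣ G(ξ₁) − G(ξ₂)`. -/
theorem contraction (m : ℤ) (hm : m ≠ 0) (N : ℕ) (hN : 1 ≤ N)
    (ξ₁ ξ₂ : PowerSeries ℚ)
    (h₁ : constantCoeff ξ₁ = 0) (h₂ : constantCoeff ξ₂ = 0)
    (hdvd : (X : PowerSeries ℚ) ^ N ∣ ξ₁ - ξ₂) :
    (X : PowerSeries ℚ) ^ (N + 1) ∣
      X * psZpow (1 - X) (-m) * psZpow (1 - ξ₁) m -
        X * psZpow (1 - X) (-m) * psZpow (1 - ξ₂) m :=
  contraction_general m N ξ₁ ξ₂ h₁ h₂ hdvd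
end

section
/- For every real number u with 0 < u < 1/4, the series Σ_{k≥1} C(2k, k)·u^k/k converges and equals 2·log(2/(1 + √(1 − 4u))). -/
/-!
The generating function of the central binomial coefficients is the binomial series
`∑ C(2k, k) x^k = (1 - 4x)^(-1/2)`, because `C(2k, k) / 4^k = (-1)^k binom(-1/2, k)`.
Hence the derivative `∑_{k ≥ 1} C(2k, k) x^(k-1)` of the series in question equals
`((1 - 4x)^(-1/2) - 1) / x = 4 / (√(1 - 4x) (1 + √(1 - 4x)))`, which is also the derivative of
`2 log (2 / (1 + √(1 - 4x)))`. Both functions vanish at `0`, so they agree on `(-1/4, 1/4)`.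
-/

open Real Set

theorem ascPochhammer_eval_one_half (n : ℕ) :
    (ascPochhammer ℝ n).eval (1 / 2) = n.factorial * Nat.centralBinom n / 4 ^ n := by
  induction n with
  | zero => simp
  | succ n ih =>
    have h : ((n : ℝ) + 1) * Nat.centralBinom (n + 1) = 2 * (2 * n + 1) * Nat.centralBinom n := by
      exact_mod_cast Nat.succ_mul_centralBinom_succ n
    rw [ascPochhammer_succ_eval, ih, Nat.factorial_succ]
    field_simp
    push_cast
    linear_combination (-2 * n.factorial * 4 ^ n : ℝ) * h

theorem Ring.choose_one_half_add_sub_one (n : ℕ) :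
    Ring.choose ((1 / 2 : ℝ) + n - 1) n = Nat.centralBinom n / 4 ^ n := by
  have h := Ring.factorial_nsmul_multichoose_eq_ascPochhammer (1 / 2 : ℝ) n
  rw [Polynomial.ascPochhammer_smeval_eq_eval, ascPochhammer_eval_one_half, nsmul_eq_mul] at h
  rw [← Ring.multichoose_eq]
  field_simp at h ⊢
  linear_combination h

theorem hasSum_centralBinom_mul_pow {x : ℝ} (hx : |x| < 1 / 4) :
    HasSum (fun n => (Nat.centralBinom n : ℝ) * x ^ n) (1 / √(1 - 4 * x)) := by
  have h4x : 4 * x ∈ Metric.eball (0 : ℝ) 1 := by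
    rw [Metric.mem_eball, edist_zero_right, enorm_eq_nnnorm, ENNReal.coe_lt_one_iff,
      ← NNReal.coe_lt_one, coe_nnnorm, norm_mul, norm_eq_abs, norm_eq_abs, abs_of_pos four_pos]
    linarith
  have h := (one_div_one_sub_rpow_hasFPowerSeriesOnBall_zero (1 / 2)).hasSum h4x
  have hterm (n : ℕ) :
      (Nat.centralBinom n : ℝ) / 4 ^ n * (4 * x) ^ n = Nat.centralBinom n * x ^ n := by
    rw [mul_pow]
    field_simp
  simpa only [FormalMultilinearSeries.ofScalars_apply_eq, Ring.choose_one_half_add_sub_one,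
    zero_add, smul_eq_mul, hterm, ← sqrt_eq_rpow] using h

theorem hasSum_centralBinom_succ_mul_pow {x : ℝ} (hx : |x| < 1 / 4) :
    HasSum (fun n => (Nat.centralBinom (n + 1) : ℝ) * x ^ n)
      (4 / (√(1 - 4 * x) * (1 + √(1 - 4 * x)))) := by
  rcases eq_or_ne x 0 with rfl | hx0
  · convert hasSum_single (f := fun n => (Nat.centralBinom (n + 1) : ℝ) * 0 ^ n) 0
      (fun n hn => by simp [hn]) using 1
    norm_num [Nat.centralBinom]
  have hsq : √(1 - 4 * x) ^ 2 = 1 - 4 * x := sq_sqrt (by linarith [le_abs_self x])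
  have hs : 0 < √(1 - 4 * x) := sqrt_pos.mpr (by linarith [le_abs_self x])
  have h : HasSum (fun n => (Nat.centralBinom (n + 1) : ℝ) * x ^ (n + 1) / x)
      ((1 / √(1 - 4 * x) - 1) / x) := by
    simpa using ((hasSum_nat_add_iff' 1).mpr (hasSum_centralBinom_mul_pow hx)).div_const x
  convert h using 1
  · ext n
    field_simp
    ring
  · field_simp
    linear_combination hsq

theorem hasDerivAt_tsum_mul_pow {𝕜 : Type*} [RCLike 𝕜] {a : ℕ → 𝕜} {ρ : ℝ} {x : 𝕜}
    (ha : Summable fun k => ‖a k‖ * (k * ρ ^ (k - 1))) (hx : ‖x‖ < ρ) :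
    HasDerivAt (fun y => ∑' k, a k * y ^ k) (∑' k, a k * (k * x ^ (k - 1))) x := by
  refine hasDerivAt_tsum_of_isPreconnected ha Metric.isOpen_ball
    (convex_ball (0 : 𝕜) ρ).isPreconnected (fun k y _ => (hasDerivAt_pow k y).const_mul (a k))
    (fun k y hy => ?_) (Metric.mem_ball_self ((norm_nonneg x).trans_lt hx)) ?_
    (mem_ball_zero_iff.mpr hx)
  · have hy : ‖y‖ ≤ ρ := (mem_ball_zero_iff.mp hy).le
    rw [norm_mul, norm_mul, norm_pow, RCLike.norm_natCast]
    gcongr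
  · refine summable_of_ne_finset_zero (s := {0}) fun k hk => ?_
    rw [zero_pow (Finset.notMem_singleton.mp hk), mul_zero]

theorem hasDerivAt_tsum_centralBinom_div_mul_pow {x : ℝ} (hx : |x| < 1 / 4) :
    HasDerivAt (fun y => ∑' k, (Nat.centralBinom k : ℝ) / k * y ^ k)
      (4 / (√(1 - 4 * x) * (1 + √(1 - 4 * x)))) x := by
  have hderiv {y : ℝ} (hy : |y| < 1 / 4) :
      HasSum (fun k => (Nat.centralBinom k : ℝ) / k * (k * y ^ (k - 1)))
        (4 / (√(1 - 4 * y) * (1 + √(1 - 4 * y)))) := by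
    have hterm (n : ℕ) :
        (Nat.centralBinom (n + 1) : ℝ) / ↑(n + 1) * (↑(n + 1) * y ^ (n + 1 - 1))
          = Nat.centralBinom (n + 1) * y ^ n := by
      rw [add_tsub_cancel_right]
      field_simp
    rw [← hasSum_nat_add_iff' 1]
    simpa only [hterm, Finset.sum_range_one, Nat.cast_zero, div_zero, zero_mul, sub_zero]
      using hasSum_centralBinom_succ_mul_pow hy
  obtain ⟨ρ, hxρ, hρ⟩ := exists_between hx
  have hρ' : |ρ| < 1 / 4 := by
    rwa [abs_of_nonneg ((abs_nonneg x).trans hxρ.le)]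
  have hsummable : Summable fun k => ‖(Nat.centralBinom k : ℝ) / k‖ * (k * ρ ^ (k - 1)) := by
    refine (hderiv hρ').summable.congr fun k => ?_
    rw [norm_of_nonneg (by positivity)]
  rw [← (hderiv hx).tsum_eq]
  exact hasDerivAt_tsum_mul_pow hsummable hxρ

theorem hasDerivAt_two_mul_log_two_div_one_add_sqrt {x : ℝ} (hx : x < 1 / 4) :
    HasDerivAt (fun y => 2 * log (2 / (1 + √(1 - 4 * y))))
      (4 / (√(1 - 4 * x) * (1 + √(1 - 4 * x)))) x := by
  have hs : 0 < √(1 - 4 * x) := sqrt_pos.mpr (by linarith)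
  have hpos : 0 < 1 + √(1 - 4 * x) := by linarith
  have hsqrt : HasDerivAt (fun y => 1 + √(1 - 4 * y)) (-4 / (2 * √(1 - 4 * x))) x := by
    refine (((hasDerivAt_id x).const_mul 4).const_sub 1 |>.sqrt ?_).const_add 1 |>.congr_deriv ?_
    · simp only [id]
      linarith
    · simp
  refine (((hasDerivAt_const x 2).div hsqrt hpos.ne').log (div_pos two_pos hpos).ne').const_mul 2
    |>.congr_deriv ?_
  simp only [Pi.div_apply]
  field_simp
  ring

theorem hasSum_centralBinom_div_mul_pow {x : ℝ} (hx : |x| < 1 / 4) :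
    HasSum (fun k => (Nat.centralBinom k : ℝ) / k * x ^ k)
      (2 * log (2 / (1 + √(1 - 4 * x)))) := by
  have hsummable : Summable fun k => (Nat.centralBinom k : ℝ) / k * x ^ k := by
    refine .of_norm_bounded (hasSum_centralBinom_mul_pow (x := |x|) (by rwa [abs_abs])).summable
      fun k => ?_
    simp only [norm_mul, norm_pow, norm_div, RCLike.norm_natCast, Real.norm_eq_abs]
    gcongr ?_ * _
    rcases k.eq_zero_or_pos with rfl | hk
    · simp
    · exact div_le_self (by positivity) (by exact_mod_cast hk)
  refine hsummable.hasSum_iff.mpr <| isOpen_Ioo.eqOn_of_deriv_eq isPreconnected_Ioo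
    (fun y hy => (hasDerivAt_tsum_centralBinom_div_mul_pow (abs_lt.mpr hy)).differentiableAt
      |>.differentiableWithinAt)
    (fun y hy => (hasDerivAt_two_mul_log_two_div_one_add_sqrt hy.2).differentiableAt
      |>.differentiableWithinAt)
    (fun y hy => (hasDerivAt_tsum_centralBinom_div_mul_pow (abs_lt.mpr hy)).deriv.trans
      (hasDerivAt_two_mul_log_two_div_one_add_sqrt hy.2).deriv.symm)
    (show (0 : ℝ) ∈ Ioo (-(1 / 4)) (1 / 4) by norm_num) ?_ (abs_lt.mp hx)
  have hterm (k : ℕ) : (Nat.centralBinom k : ℝ) / k * 0 ^ k = 0 := by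
    rcases k with _ | k <;> simp
  norm_num [hterm]

/-- For `0 < u < 1/4`, the series `Σ_{k≥1} C(2k,k) u^k / k` converges to
`2·log(2/(1 + √(1 − 4u)))`. -/
theorem central_binomial_log_sum (u : ℝ) (hu0 : 0 < u) (hu : u < 1 / 4) :
    HasSum (fun k : ℕ => if k = 0 then (0 : ℝ)
        else (Nat.choose (2 * k) k : ℝ) * u ^ k / k)
      (2 * Real.log (2 / (1 + Real.sqrt (1 - 4 * u)))) := by
  have hterm (k : ℕ) : (if k = 0 then (0 : ℝ) else (Nat.choose (2 * k) k : ℝ) * u ^ k / k)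
      = Nat.centralBinom k / k * u ^ k := by
    rcases eq_or_ne k 0 with rfl | hk
    · simp -- the right side is `1 / 0 * 1 = 0`
    · rw [if_neg hk, Nat.centralBinom_eq_two_mul_choose, mul_div_right_comm]
  simpa only [hterm] using hasSum_centralBinom_div_mul_pow (abs_lt.mpr ⟨by linarith, hu⟩)
end
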